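/- arXiv:2511.17921 — 2 statements merged into one kernel-verified Lean document; each statement's English description precedes it below -/
import Mathlib

section
/- Let (V, μ) be a countable weighted rooted tree with finite total measure, and let T be the Hardy operator Tf(t) = (1/μ(S_t)) Σ_{s ⪰ t} |f(s)| μ(s). Then for every q ∈ (1,∞) and every f ∈ ℓ^q(V, μ), one has ‖Tf‖_{ℓ^q(V,μ)} ≤ 2 (q/(q−1))^{1/q} ‖f‖_{ℓ^q(V,μ)}. -/
/-- Rooted tree encoded by a parent map: `s ⪰ t` iff `∃ n, p^[n] s = t`;
the shadow of `t` is `S_t = {s | s ⪰ t}`. -/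
def shadow {V : Type*} (p : V → V) (t : V) : Set V :=
  {s | ∃ n : ℕ, p^[n] s = t}

/-- The Hardy-type operator `Tf(t) = (1/μ(S_t)) ∑_{s ⪰ t} |f(s)| μ(s)`. -/
noncomputable def hardyOp {V : Type*} (p : V → V) (μ f : V → ℝ) (t : V) : ℝ :=
  (1 / ∑' s : shadow p t, μ s.1) * ∑' s : shadow p t, |f s.1| * μ s.1

/-!
Splitting `f` at height `t` gives `T f ≤ T (f 1_{|f| > t}) + t`, so the bound follows from the
weak type `(1,1)` estimate `t μ{T g > t} ≤ ‖g‖₁` by Marcinkiewicz interpolation: integrating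
`μ{T f > 2t} ≤ t⁻¹ ∫_{|f| > t} |f|` against `q (2t)^{q-1} dt` (layer cake) yields
`‖T f‖_q^q ≤ 2^q q/(q-1) ‖f‖_q^q`. For the weak type estimate, the level set `{T g > t}` is covered
by the pairwise disjoint shadows `S_w` of its maximal elements, and `t μ(S_w) ≤ ∫_{S_w} g` on each.
-/

open MeasureTheory Set
open scoped ENNReal

namespace MeasureTheory

variable {α : Type*} [MeasurableSpace α] {m : Measure α}

theorem lintegral_rpow_le_of_mul_measure_lt_le {F f : α → ℝ} (hF : 0 ≤ F) (hFm : AEMeasurable F m)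
    (hf : 0 ≤ f) (hfm : Measurable f) {q : ℝ} (hq : 1 < q)
    (hweak : ∀ t > 0, ENNReal.ofReal t * m {x | t < F x} ≤
      ∫⁻ x in {x | t < f x}, ENNReal.ofReal (f x) ∂m) :
    ∫⁻ x, ENNReal.ofReal (F x ^ q) ∂m ≤
      ENNReal.ofReal (q / (q - 1)) * ∫⁻ x, ENNReal.ofReal (f x ^ q) ∂m := by
  set ν := m.withDensity fun x => ENNReal.ofReal (f x)
  have hν : ∀ t, ν {x | t < f x} = ∫⁻ x in {x | t < f x}, ENNReal.ofReal (f x) ∂m :=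
    fun t => withDensity_apply _ (measurableSet_lt measurable_const hfm)
  have hfq : ∫⁻ x, ENNReal.ofReal (f x ^ q) ∂m =
      ∫⁻ x, ENNReal.ofReal (f x ^ (q - 1)) ∂ν := by
    rw [lintegral_withDensity_eq_lintegral_mul _ hfm.ennreal_ofReal (by fun_prop)]
    congr with x
    rw [Pi.mul_apply, ← ENNReal.ofReal_mul (hf x), ← Real.rpow_one_add' (hf x) (by linarith)]
    ring_nf
  -- `∫⁻ x in {t < f}, f ∂m` is `ν {t < f}`, so both sides are layer-cake integrals.
  have hpt : ∀ t ∈ Ioi (0 : ℝ), m {x | t < F x} * ENNReal.ofReal (t ^ (q - 1)) ≤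
      ν {x | t < f x} * ENNReal.ofReal (t ^ (q - 1 - 1)) := by
    intro t ht
    calc m {x | t < F x} * ENNReal.ofReal (t ^ (q - 1))
        = ENNReal.ofReal t * m {x | t < F x} * ENNReal.ofReal (t ^ (q - 1 - 1)) := by
          rw [mul_comm (ENNReal.ofReal t), mul_assoc, ← ENNReal.ofReal_mul ht.le,
            ← Real.rpow_one_add' ht.le (by linarith)]
          ring_nf
      _ ≤ ν {x | t < f x} * ENNReal.ofReal (t ^ (q - 1 - 1)) := by
          rw [hν]
          gcongr
          exact hweak t ht
  calc ∫⁻ x, ENNReal.ofReal (F x ^ q) ∂m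
      = ENNReal.ofReal q * ∫⁻ t in Ioi 0, m {x | t < F x} * ENNReal.ofReal (t ^ (q - 1)) :=
        lintegral_rpow_eq_lintegral_meas_lt_mul m (ae_of_all _ hF) hFm (by linarith)
    _ ≤ ENNReal.ofReal q * ∫⁻ t in Ioi 0, ν {x | t < f x} * ENNReal.ofReal (t ^ (q - 1 - 1)) := by
        gcongr ENNReal.ofReal q * ?_
        exact setLIntegral_mono' measurableSet_Ioi hpt
    _ = ENNReal.ofReal (q / (q - 1)) * (ENNReal.ofReal (q - 1) *
          ∫⁻ t in Ioi 0, ν {x | t < f x} * ENNReal.ofReal (t ^ (q - 1 - 1))) := by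
        rw [← mul_assoc, ← ENNReal.ofReal_mul (by positivity), div_mul_cancel₀ _ (by linarith)]
    _ = ENNReal.ofReal (q / (q - 1)) * ∫⁻ x, ENNReal.ofReal (f x ^ q) ∂m := by
        rw [hfq, lintegral_rpow_eq_lintegral_meas_lt_mul ν (ae_of_all _ hf) hfm.aemeasurable
          (by linarith)]

theorem mul_measure_le_setLIntegral_of_lt_setLAverage {s : Set α} {g : α → ℝ≥0∞} {t : ℝ≥0∞}
    (ht : t < ⨍⁻ x in s, g x ∂m) : t * m s ≤ ∫⁻ x in s, g x ∂m := by
  have hs : m s ≠ ∞ := fun hs => by simp [setLAverage_eq, hs] at ht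
  calc t * m s ≤ (⨍⁻ x in s, g x ∂m) * m s := by gcongr
    _ = ∫⁻ x in s, g x ∂m := by rw [mul_comm, measure_mul_setLAverage _ hs]

theorem setLAverage_le_setLAverage_indicator_add (s : Set α) (g : α → ℝ≥0∞) (t : ℝ≥0∞) :
    ⨍⁻ x in s, g x ∂m ≤ ⨍⁻ x in s, {x | t < g x}.indicator g x ∂m + t := by
  have hpt : ∀ x, g x ≤ {x | t < g x}.indicator g x + t := fun x => by
    by_cases h : t < g x
    · simp [indicator_of_mem (show x ∈ {x | t < g x} from h)]
    · exact (not_lt.1 h).trans le_add_self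
  calc ⨍⁻ x in s, g x ∂m ≤ ⨍⁻ x in s, ({x | t < g x}.indicator g x + t) ∂m :=
        setLAverage_mono_ae s (ae_of_all _ hpt)
    _ = (∫⁻ x in s, {x | t < g x}.indicator g x ∂m + t * m s) / m s := by
        rw [setLAverage_eq, lintegral_add_right _ measurable_const, setLIntegral_const]
    _ ≤ ⨍⁻ x in s, {x | t < g x}.indicator g x ∂m + t := by
        rw [ENNReal.add_div, setLAverage_eq]
        gcongr
        exact ENNReal.div_le_of_le_mul le_rfl

end MeasureTheory

section Tree

variable {V : Type*} {p : V → V}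

theorem mem_shadow_self (t : V) : t ∈ shadow p t := ⟨0, rfl⟩

theorem mem_shadow_or_mem_shadow {s u w : V} (hu : s ∈ shadow p u) (hw : s ∈ shadow p w) :
    u ∈ shadow p w ∨ w ∈ shadow p u := by
  obtain ⟨i, rfl⟩ := hu
  obtain ⟨j, rfl⟩ := hw
  rcases le_total i j with h | h
  · exact .inl ⟨j - i, by rw [← Function.iterate_add_apply, Nat.sub_add_cancel h]⟩
  · exact .inr ⟨i - j, by rw [← Function.iterate_add_apply, Nat.sub_add_cancel h]⟩

-- The ancestors of `s` are the `p^[k] s` with `k ≤ N`, where `p^[N] s = a`: take the largest `k`.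
theorem exists_maximal_ancestor {a : V} (hroot : p a = a) (hreach : ∀ t, ∃ n, p^[n] t = a)
    {P : V → Prop} {s : V} (hs : P s) :
    ∃ w, s ∈ shadow p w ∧ P w ∧ ∀ u, w ∈ shadow p u → P u → u = w := by
  classical
  obtain ⟨N, hN⟩ := hreach s
  have hstable : ∀ n, N ≤ n → p^[n] s = p^[N] s := fun n hn => by
    rw [← Nat.sub_add_cancel hn, Function.iterate_add_apply, hN, Function.iterate_fixed hroot]
  set k := Nat.findGreatest (fun k => P (p^[k] s)) N
  have hk : P (p^[k] s) := Nat.findGreatest_spec (P := fun k => P (p^[k] s)) (Nat.zero_le N) hs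
  refine ⟨p^[k] s, ⟨k, rfl⟩, hk, ?_⟩
  rintro u ⟨j, rfl⟩ hPu
  rw [← Function.iterate_add_apply] at hPu ⊢
  rcases le_or_gt (j + k) N with h | h
  · have : j + k ≤ k := Nat.le_findGreatest h hPu
    rw [show j = 0 by omega, zero_add]
  · rw [hstable _ h.le] at hPu ⊢
    have hkN : k = N := le_antisymm (Nat.findGreatest_le N)
      (Nat.le_findGreatest (P := fun k => P (p^[k] s)) le_rfl hPu)
    rw [hkN]

variable [MeasurableSpace V] [DiscreteMeasurableSpace V] [Countable V]

theorem mul_measure_lt_setLAverage_shadow_le {a : V} (hroot : p a = a)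
    (hreach : ∀ t, ∃ n, p^[n] t = a) (m : Measure V) (g : V → ℝ≥0∞) (t : ℝ≥0∞) :
    t * m {s | t < ⨍⁻ u in shadow p s, g u ∂m} ≤ ∫⁻ u, g u ∂m := by
  set P := fun s => t < ⨍⁻ u in shadow p s, g u ∂m
  set W := {w | P w ∧ ∀ u, w ∈ shadow p u → P u → u = w}
  have hcover : {s | P s} ⊆ ⋃ w ∈ W, shadow p w := fun s hs => by
    obtain ⟨w, hsw, hw⟩ := exists_maximal_ancestor hroot hreach hs
    exact mem_biUnion hw hsw
  have hdisj : W.PairwiseDisjoint (shadow p) := by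
    intro w₁ hw₁ w₂ hw₂ hne
    refine Set.disjoint_left.2 fun s hs₁ hs₂ => ?_
    rcases mem_shadow_or_mem_shadow hs₁ hs₂ with h | h
    · exact hne (hw₁.2 w₂ h hw₂.1).symm
    · exact hne (hw₂.2 w₁ h hw₁.1)
  calc t * m {s | P s} ≤ t * m (⋃ w ∈ W, shadow p w) := by gcongr
    _ = ∑' w : W, t * m (shadow p w) := by
        rw [measure_biUnion W.to_countable hdisj fun _ _ => .of_discrete, ENNReal.tsum_mul_left]
    _ ≤ ∑' w : W, ∫⁻ u in shadow p w, g u ∂m :=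
        ENNReal.tsum_le_tsum fun w => mul_measure_le_setLIntegral_of_lt_setLAverage w.2.1
    _ = ∫⁻ u in ⋃ w ∈ W, shadow p w, g u ∂m :=
        (lintegral_biUnion W.to_countable (fun _ _ => .of_discrete) hdisj g).symm
    _ ≤ ∫⁻ u, g u ∂m := setLIntegral_le_lintegral _ _

theorem mul_measure_two_mul_lt_setLAverage_shadow_le {a : V} (hroot : p a = a)
    (hreach : ∀ t, ∃ n, p^[n] t = a) (m : Measure V) (g : V → ℝ≥0∞) {t : ℝ≥0∞} (ht : t ≠ ∞) :
    t * m {s | 2 * t < ⨍⁻ u in shadow p s, g u ∂m} ≤ ∫⁻ u in {u | t < g u}, g u ∂m := by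
  set h := {u | t < g u}.indicator g
  have hsub : {s | 2 * t < ⨍⁻ u in shadow p s, g u ∂m} ⊆
      {s | t < ⨍⁻ u in shadow p s, h u ∂m} := fun s hs => by
    have := hs.trans_le (setLAverage_le_setLAverage_indicator_add (shadow p s) g t)
    rw [two_mul] at this
    exact (ENNReal.add_lt_add_iff_right ht).1 this
  calc t * m {s | 2 * t < ⨍⁻ u in shadow p s, g u ∂m}
      ≤ t * m {s | t < ⨍⁻ u in shadow p s, h u ∂m} := by gcongr
    _ ≤ ∫⁻ u, h u ∂m := mul_measure_lt_setLAverage_shadow_le hroot hreach m h t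
    _ = ∫⁻ u in {u | t < g u}, g u ∂m := lintegral_indicator .of_discrete g

end Tree

theorem summable_abs_mul_of_summable_rpow_mul {ι : Type*} {μ f : ι → ℝ} (hμ : ∀ s, 0 ≤ μ s)
    (hμsum : Summable μ) {q : ℝ} (hq : 1 ≤ q) (hf : Summable fun s => |f s| ^ q * μ s) :
    Summable fun s => |f s| * μ s := by
  refine (hμsum.add hf).of_nonneg_of_le (fun s => mul_nonneg (abs_nonneg _) (hμ s)) fun s => ?_
  have hle : |f s| ≤ 1 + |f s| ^ q := by
    rcases le_total |f s| 1 with h | h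
    · linarith [Real.rpow_nonneg (abs_nonneg (f s)) q]
    · linarith [Real.self_le_rpow_of_one_le h hq]
  calc |f s| * μ s ≤ (1 + |f s| ^ q) * μ s := mul_le_mul_of_nonneg_right hle (hμ s)
    _ = μ s + |f s| ^ q * μ s := by ring

theorem hardyOp_nonneg {V : Type*} {p : V → V} {μ f : V → ℝ} (hμ : ∀ s, 0 ≤ μ s) (t : V) :
    0 ≤ hardyOp p μ f t :=
  mul_nonneg (one_div_nonneg.2 (tsum_nonneg fun s => hμ s))
    (tsum_nonneg fun s => mul_nonneg (abs_nonneg _) (hμ s))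

section WeightedCountable

variable {V : Type*} [MeasurableSpace V] [MeasurableSingletonClass V] [Countable V]
  {m : Measure V} {μ : V → ℝ}

theorem setLIntegral_ofReal_eq_ofReal_tsum (hm : ∀ s, m {s} = ENNReal.ofReal (μ s))
    (hμ : ∀ s, 0 ≤ μ s) {g : V → ℝ} (hg : ∀ s, 0 ≤ g s) (hgμ : Summable fun s => g s * μ s)
    (S : Set V) :
    ∫⁻ s in S, ENNReal.ofReal (g s) ∂m = ENNReal.ofReal (∑' s : S, g s * μ s) := by
  rw [lintegral_countable _ S.to_countable,
    ENNReal.ofReal_tsum_of_nonneg (fun s : S => mul_nonneg (hg s) (hμ s)) (hgμ.subtype S)]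
  congr with s
  rw [hm, ENNReal.ofReal_mul (hg s)]

theorem tsum_mul_eq_toReal_lintegral (hm : ∀ s, m {s} = ENNReal.ofReal (μ s))
    (hμ : ∀ s, 0 ≤ μ s) {g : V → ℝ} (hg : ∀ s, 0 ≤ g s) :
    ∑' s, g s * μ s = (∫⁻ s, ENNReal.ofReal (g s) ∂m).toReal := by
  rw [lintegral_countable', ENNReal.tsum_toReal_eq fun s => by simp [hm, ENNReal.mul_eq_top]]
  congr with s
  rw [hm, ← ENNReal.ofReal_mul (hg s), ENNReal.toReal_ofReal (mul_nonneg (hg s) (hμ s))]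

theorem ofReal_hardyOp (p : V → V) (hm : ∀ s, m {s} = ENNReal.ofReal (μ s))
    (hμpos : ∀ s, 0 < μ s) (hμsum : Summable μ) {f : V → ℝ}
    (hfμ : Summable fun s => |f s| * μ s) (t : V) :
    ENNReal.ofReal (hardyOp p μ f t) = ⨍⁻ s in shadow p t, ENNReal.ofReal |f s| ∂m := by
  have hμ : ∀ s, 0 ≤ μ s := fun s => (hμpos s).le
  have hA : 0 < ∑' s : shadow p t, μ s :=
    (hμsum.subtype _).tsum_pos (fun s => hμ s) ⟨t, mem_shadow_self t⟩ (hμpos t)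
  have hmS : m (shadow p t) = ENNReal.ofReal (∑' s : shadow p t, μ s) := by
    simpa using setLIntegral_ofReal_eq_ofReal_tsum hm hμ (g := fun _ => 1)
      (fun _ => zero_le_one) (by simpa using hμsum) (shadow p t)
  rw [hardyOp, one_div_mul_eq_div, ENNReal.ofReal_div_of_pos hA, setLAverage_eq, hmS,
    setLIntegral_ofReal_eq_ofReal_tsum hm hμ (fun s => abs_nonneg (f s)) hfμ]

theorem mul_measure_two_mul_lt_hardyOp_le [DiscreteMeasurableSpace V] {p : V → V} {a : V}
    (hroot : p a = a) (hreach : ∀ t, ∃ n, p^[n] t = a) (hm : ∀ s, m {s} = ENNReal.ofReal (μ s))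
    (hμpos : ∀ s, 0 < μ s) (hμsum : Summable μ) {f : V → ℝ}
    (hfμ : Summable fun s => |f s| * μ s) {t : ℝ} (ht : 0 ≤ t) :
    ENNReal.ofReal t * m {s | 2 * t < hardyOp p μ f s} ≤
      ∫⁻ s in {s | t < |f s|}, ENNReal.ofReal |f s| ∂m := by
  have hT : {s | 2 * t < hardyOp p μ f s} =
      {s | 2 * ENNReal.ofReal t < ⨍⁻ u in shadow p s, ENNReal.ofReal |f u| ∂m} := by
    ext s
    rw [mem_ofPred_eq, mem_ofPred_eq, ← ofReal_hardyOp p hm hμpos hμsum hfμ,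
      ← ENNReal.ofReal_ofNat 2, ← ENNReal.ofReal_mul zero_le_two,
      ENNReal.ofReal_lt_ofReal_iff_of_nonneg (by positivity)]
  have hf : {s | t < |f s|} = {s | ENNReal.ofReal t < ENNReal.ofReal |f s|} := by
    ext s
    exact (ENNReal.ofReal_lt_ofReal_iff_of_nonneg ht).symm
  rw [hT, hf]
  exact mul_measure_two_mul_lt_setLAverage_shadow_le hroot hreach m _ ENNReal.ofReal_ne_top

end WeightedCountable

theorem tsum_hardyOp_rpow_le {V : Type*} [Countable V] {p : V → V} {a : V} (hroot : p a = a)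
    (hreach : ∀ t, ∃ n, p^[n] t = a) {μ : V → ℝ} (hμpos : ∀ t, 0 < μ t) (hμsum : Summable μ)
    {q : ℝ} (hq : 1 < q) {f : V → ℝ} (hf : Summable fun s => |f s| ^ q * μ s) :
    ∑' t, |hardyOp p μ f t| ^ q * μ t ≤ 2 ^ q * (q / (q - 1)) * ∑' s, |f s| ^ q * μ s := by
  let _ : MeasurableSpace V := ⊤
  set m := Measure.count.withDensity fun s => ENNReal.ofReal (μ s)
  have hm : ∀ s, m {s} = ENNReal.ofReal (μ s) := by simp [m]
  have hμ : ∀ s, 0 ≤ μ s := fun s => (hμpos s).le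
  have hfμ := summable_abs_mul_of_summable_rpow_mul hμ hμsum hq.le hf
  have hT : ∀ t, 0 ≤ hardyOp p μ f t := fun t => hardyOp_nonneg hμ t
  have hstrong := lintegral_rpow_le_of_mul_measure_lt_le (m := m)
    (F := fun t => hardyOp p μ f t / 2) (f := fun s => |f s|) (fun t => div_nonneg (hT t) zero_le_two)
    Measurable.of_discrete.aemeasurable (fun s => abs_nonneg (f s)) .of_discrete hq
    fun t ht => by
      simpa only [lt_div_iff₀ (two_pos : (0 : ℝ) < 2), mul_comm t]
        using mul_measure_two_mul_lt_hardyOp_le hroot hreach hm hμpos hμsum hfμ ht.le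
  have hfin : ∫⁻ s, ENNReal.ofReal (|f s| ^ q) ∂m ≠ ∞ := by
    rw [← setLIntegral_univ, setLIntegral_ofReal_eq_ofReal_tsum hm hμ (fun s => by positivity) hf]
    exact ENNReal.ofReal_ne_top
  calc ∑' t, |hardyOp p μ f t| ^ q * μ t = 2 ^ q * ∑' t, (hardyOp p μ f t / 2) ^ q * μ t := by
        rw [← tsum_mul_left]
        congr with t
        rw [abs_of_nonneg (hT t), Real.div_rpow (hT t) zero_le_two]
        field_simp
    _ = 2 ^ q * (∫⁻ t, ENNReal.ofReal ((hardyOp p μ f t / 2) ^ q) ∂m).toReal := by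
        rw [tsum_mul_eq_toReal_lintegral hm hμ fun t =>
          Real.rpow_nonneg (div_nonneg (hT t) zero_le_two) q]
    _ ≤ 2 ^ q * (ENNReal.ofReal (q / (q - 1)) * ∫⁻ s, ENNReal.ofReal (|f s| ^ q) ∂m).toReal := by
        gcongr
        exact ENNReal.mul_ne_top ENNReal.ofReal_ne_top hfin
    _ = 2 ^ q * (q / (q - 1)) * ∑' s, |f s| ^ q * μ s := by
        rw [ENNReal.toReal_mul, ENNReal.toReal_ofReal (div_nonneg (by linarith) (by linarith)),
          tsum_mul_eq_toReal_lintegral hm hμ fun s => by positivity, mul_assoc]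

/-- The Hardy-type operator is strong `(q,q)` continuous for `1 < q < ∞`:
`‖Tf‖_{ℓ^q(V,μ)} ≤ 2 (q/(q-1))^{1/q} ‖f‖_{ℓ^q(V,μ)}`. -/
theorem hardy_strong_q_q {V : Type*} [Countable V] (p : V → V) (a : V)
    (hroot : p a = a) (hreach : ∀ t : V, ∃ n : ℕ, p^[n] t = a)
    (μ : V → ℝ) (hμpos : ∀ t, 0 < μ t) (hμsum : Summable μ)
    (q : ℝ) (hq : 1 < q)
    (f : V → ℝ) (hf : Summable fun s => |f s| ^ q * μ s) :
    (∑' t : V, |hardyOp p μ f t| ^ q * μ t) ^ (1 / q) ≤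
      2 * (q / (q - 1)) ^ (1 / q) * (∑' s : V, |f s| ^ q * μ s) ^ (1 / q) := by
  have hq0 : 0 < q := by linarith
  have hX : 0 ≤ ∑' s, |f s| ^ q * μ s :=
    tsum_nonneg fun s => mul_nonneg (by positivity) (hμpos s).le
  calc (∑' t, |hardyOp p μ f t| ^ q * μ t) ^ (1 / q)
      ≤ (2 ^ q * (q / (q - 1)) * ∑' s, |f s| ^ q * μ s) ^ (1 / q) :=
        Real.rpow_le_rpow (tsum_nonneg fun t => mul_nonneg (by positivity) (hμpos t).le)
          (tsum_hardyOp_rpow_le hroot hreach hμpos hμsum hq hf) (by positivity)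
    _ = 2 * (q / (q - 1)) ^ (1 / q) * (∑' s, |f s| ^ q * μ s) ^ (1 / q) := by
        have hc : 0 ≤ q / (q - 1) := div_nonneg hq0.le (by linarith)
        rw [Real.mul_rpow (by positivity) hX, Real.mul_rpow (by positivity) hc, one_div,
          Real.rpow_rpow_inv zero_le_two hq0.ne']
end

section
/- Let (V, μ) be a weighted graph with a rooted spanning tree satisfying μ(S_t) ≤ c·μ(t) for all t. Then for every f ∈ ℓ¹(V,μ) with Σ_{s∈V} f(s)μ(s) = 0, one has ‖f‖_{ℓ¹(V,μ)} ≤ 2c · ‖|∇f|‖_{ℓ¹(V,μ)}, where |∇f|(t) = Σ_{s∼t} |f(s)−f(t)|. -/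
/-- The length of the gradient of `f` at `t`: `|∇f|(t) = ∑_{s ~ t} |f(s) - f(t)|`. -/
noncomputable def gradLen {V : Type*} (G : SimpleGraph V) (f : V → ℝ) (t : V) : ℝ :=
  ∑' s : {s : V // G.Adj t s}, |f s.1 - f t|

/-!
Telescoping `f s - f a` along the tree path from `s` to the root bounds `|f s - f a|` by the
differences `|f t - f (pa t)|` over the vertices `t ≠ a` with `s ⪰ t`. Weighting by `μ s` and
exchanging the two sums, the tree edge `(t, pa t)` receives total weight `μ(S_t) ≤ c μ(t)`,
and as an edge of `G` its difference is dominated by `|∇f|(t)`. Finally, the mean-zero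
condition gives `‖f‖₁ ≤ 2 ‖f - f a‖₁`.
-/

open scoped ENNReal

theorem Function.iterate_injOn_Iio_of_forall_lt_ne {α : Type*} {g : α → α} {x y : α} {n : ℕ}
    (hn : g^[n] x = y) (hmin : ∀ k < n, g^[k] x ≠ y) :
    Set.InjOn (fun k => g^[k] x) (Set.Iio n) := by
  intro i hi j hj hij
  by_contra hne
  wlog hlt : i < j generalizing i j
  · exact this hj hi hij.symm (Ne.symm hne) (by omega)
  refine hmin (n - j + i) (by simp only [Set.mem_Iio] at hj; omega) ?_
  simp only at hij
  rw [Function.iterate_add_apply, hij, ← Function.iterate_add_apply,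
    Nat.sub_add_cancel (Set.mem_Iio.mp hj).le, hn]

theorem tsum_ofReal_abs_mul_le_two_mul {V : Type*} {μ f : V → ℝ} (hμ : ∀ s, 0 ≤ μ s)
    (hμsum : Summable μ) (hf : Summable fun s => |f s| * μ s)
    (hmean : ∑' s, f s * μ s = 0) (m : ℝ) :
    ∑' s, ENNReal.ofReal (|f s| * μ s) ≤ 2 * ∑' s, ENNReal.ofReal (|f s - m| * μ s) := by
  have hfμ : Summable fun s => f s * μ s := by
    refine Summable.of_abs (hf.congr fun s => ?_)
    rw [abs_mul, abs_of_nonneg (hμ s)]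
  have hg : Summable fun s => |f s - m| * μ s :=
    Summable.of_nonneg_of_le (fun s => mul_nonneg (abs_nonneg _) (hμ s))
      (fun s => by nlinarith [abs_sub (f s) m, hμ s]) (hf.add (hμsum.mul_left |m|))
  have htri : ∑' s, |f s| * μ s ≤ ∑' s, |f s - m| * μ s + |m| * ∑' s, μ s := by
    rw [← tsum_mul_left, ← hg.tsum_add (hμsum.mul_left |m|)]
    refine hf.tsum_le_tsum (fun s => ?_) (hg.add (hμsum.mul_left |m|))
    nlinarith [abs_sub_abs_le_abs_sub (f s) m, hμ s]
  -- `m μ(V) = ∑ (m - f s) μ s` since `f` has mean zero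
  have hconst : |m| * ∑' s, μ s ≤ ∑' s, |f s - m| * μ s :=
    calc |m| * ∑' s, μ s = ‖∑' s, (m - f s) * μ s‖ := by
          simp_rw [sub_mul]
          rw [(hμsum.mul_left m).tsum_sub hfμ, hmean, sub_zero, tsum_mul_left, Real.norm_eq_abs,
            abs_mul, abs_of_nonneg (tsum_nonneg hμ)]
      _ ≤ ∑' s, ‖(m - f s) * μ s‖ := by
          refine norm_tsum_le_tsum_norm (hg.congr fun s => ?_)
          rw [norm_mul, Real.norm_eq_abs, Real.norm_eq_abs, abs_of_nonneg (hμ s), abs_sub_comm]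
      _ = ∑' s, |f s - m| * μ s := by
          simp_rw [norm_mul, Real.norm_eq_abs, abs_of_nonneg (hμ _), abs_sub_comm]
  rw [← ENNReal.ofReal_tsum_of_nonneg (fun s => mul_nonneg (abs_nonneg _) (hμ s)) hf,
    ← ENNReal.ofReal_tsum_of_nonneg (fun s => mul_nonneg (abs_nonneg _) (hμ s)) hg,
    ← ENNReal.ofReal_ofNat 2, ← ENNReal.ofReal_mul zero_le_two]
  exact ENNReal.ofReal_le_ofReal (by linarith)

theorem abs_sub_le_gradLen {V : Type*} {G : SimpleGraph V} (f : V → ℝ) {t u : V}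
    (hfin : {s : V | G.Adj t s}.Finite) (hadj : G.Adj t u) : |f u - f t| ≤ gradLen G f t :=
  haveI : Finite {s : V // G.Adj t s} := hfin.to_subtype
  Summable.of_finite.le_tsum (f := fun s : {s : V // G.Adj t s} => |f s - f t|) ⟨u, hadj⟩
    fun _ _ => abs_nonneg _

section TreePath

variable {V : Type*} (pa : V → V) (a : V)

-- The root carries no tree edge.
noncomputable def parentEdgeDiff (f : V → ℝ) : V → ℝ≥0∞ :=
  Set.indicator {a}ᶜ fun t => ENNReal.ofReal |f t - f (pa t)|

theorem ofReal_abs_sub_le_tsum_parentEdgeDiff (f : V → ℝ) {s : V} (hs : ∃ n, pa^[n] s = a) :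
    ENNReal.ofReal |f s - f a| ≤
      ∑' t, Set.indicator {t | s ∈ shadow pa t} (parentEdgeDiff pa a f) t := by
  classical
  -- stopping the path at its first visit to `a` makes its vertices distinct
  obtain ⟨n, hn, hmin⟩ : ∃ n, pa^[n] s = a ∧ ∀ k < n, pa^[k] s ≠ a :=
    ⟨Nat.find hs, Nat.find_spec hs, fun k hk => Nat.find_min hs hk⟩
  have hinj := Function.iterate_injOn_Iio_of_forall_lt_ne hn hmin
  have hstep : ∀ k ∈ Finset.range n,
      ENNReal.ofReal |f (pa^[k] s) - f (pa^[k + 1] s)| =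
        Set.indicator {t | s ∈ shadow pa t} (parentEdgeDiff pa a f) (pa^[k] s) := by
    intro k hk
    rw [Set.indicator_of_mem (show pa^[k] s ∈ {t | s ∈ shadow pa t} from ⟨k, rfl⟩),
      parentEdgeDiff, Set.indicator_of_mem (hmin k (Finset.mem_range.mp hk)),
      Function.iterate_succ_apply']
  calc ENNReal.ofReal |f s - f a|
      ≤ ENNReal.ofReal (∑ k ∈ Finset.range n, |f (pa^[k] s) - f (pa^[k + 1] s)|) := by
        refine ENNReal.ofReal_le_ofReal ?_
        simpa only [Real.dist_eq, hn, Function.iterate_zero_apply] using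
          dist_le_range_sum_dist (fun k => f (pa^[k] s)) n
    _ = ∑ t ∈ (Finset.range n).image (pa^[·] s),
          Set.indicator {t | s ∈ shadow pa t} (parentEdgeDiff pa a f) t := by
        rw [ENNReal.ofReal_sum_of_nonneg (fun _ _ => abs_nonneg _), Finset.sum_congr rfl hstep,
          Finset.sum_image fun i hi j hj h => hinj (by simpa using hi) (by simpa using hj) h]
    _ ≤ _ := ENNReal.sum_le_tsum _

theorem tsum_tsum_indicator_shadow_mul (E w : V → ℝ≥0∞) :
    ∑' s, (∑' t, Set.indicator {t | s ∈ shadow pa t} E t) * w s =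
      ∑' t, E t * ∑' s, Set.indicator (shadow pa t) w s := by
  simp_rw [← ENNReal.tsum_mul_right, ← ENNReal.tsum_mul_left]
  rw [ENNReal.tsum_comm]
  refine tsum_congr fun t => tsum_congr fun s => ?_
  by_cases hs : s ∈ shadow pa t
  · rw [Set.indicator_of_mem (show t ∈ {t | s ∈ shadow pa t} from hs), Set.indicator_of_mem hs]
  · rw [Set.indicator_of_notMem (show t ∉ {t | s ∈ shadow pa t} from hs),
      Set.indicator_of_notMem hs, zero_mul, mul_zero]

theorem tsum_indicator_shadow_ofReal_le {μ : V → ℝ} (hμ : ∀ s, 0 ≤ μ s) (hμsum : Summable μ)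
    {c : ℝ} {t : V} (hjohn : ∑' s : shadow pa t, μ s.1 ≤ c * μ t) :
    ∑' s, Set.indicator (shadow pa t) (fun s => ENNReal.ofReal (μ s)) s ≤
      ENNReal.ofReal (c * μ t) := by
  rw [← tsum_subtype, ← ENNReal.ofReal_tsum_of_nonneg (f := fun s : shadow pa t => μ s)
    (fun s => hμ s) (hμsum.subtype _)]
  exact ENNReal.ofReal_le_ofReal hjohn

theorem parentEdgeDiff_le_gradLen {G : SimpleGraph V} (f : V → ℝ)
    (hlf : ∀ t : V, {s : V | G.Adj t s}.Finite) (htree : ∀ t : V, t ≠ a → G.Adj t (pa t))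
    (t : V) : parentEdgeDiff pa a f t ≤ ENNReal.ofReal (gradLen G f t) := by
  by_cases ht : t = a
  · simp [parentEdgeDiff, ht]
  · rw [parentEdgeDiff, Set.indicator_of_mem ht, abs_sub_comm]
    exact ENNReal.ofReal_le_ofReal (abs_sub_le_gradLen f (hlf t) (htree t ht))

end TreePath

theorem global_poincare_one_general {V : Type*} [Countable V] (G : SimpleGraph V)
    (hlf : ∀ t : V, {s : V | G.Adj t s}.Finite)
    (pa : V → V) (a : V)
    (hreach : ∀ t : V, ∃ n : ℕ, pa^[n] t = a)
    (htree : ∀ t : V, t ≠ a → G.Adj t (pa t))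
    (μ : V → ℝ) (hμpos : ∀ t, 0 < μ t) (hμsum : Summable μ)
    (c : ℝ) (hc : 0 < c)
    (hjohn : ∀ t : V, (∑' s : shadow pa t, μ s.1) ≤ c * μ t)
    (f : V → ℝ) (hf : Summable fun s => |f s| * μ s)
    (hmean : (∑' s : V, f s * μ s) = 0) :
    (∑' s : V, ENNReal.ofReal (|f s| * μ s)) ≤
      ENNReal.ofReal (2 * c) * ∑' t : V, ENNReal.ofReal (gradLen G f t * μ t) := by
  have hμ : ∀ t, 0 ≤ μ t := fun t => (hμpos t).le
  calc (∑' s, ENNReal.ofReal (|f s| * μ s))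
      ≤ 2 * ∑' s, ENNReal.ofReal |f s - f a| * ENNReal.ofReal (μ s) := by
        simp_rw [← ENNReal.ofReal_mul (abs_nonneg _)]
        exact tsum_ofReal_abs_mul_le_two_mul hμ hμsum hf hmean (f a)
    _ ≤ 2 * ∑' s, (∑' t, Set.indicator {t | s ∈ shadow pa t} (parentEdgeDiff pa a f) t) *
          ENNReal.ofReal (μ s) := by
        gcongr with s
        exact ofReal_abs_sub_le_tsum_parentEdgeDiff pa a f (hreach s)
    _ = 2 * ∑' t, parentEdgeDiff pa a f t *
          ∑' s, Set.indicator (shadow pa t) (fun s => ENNReal.ofReal (μ s)) s := by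
        rw [tsum_tsum_indicator_shadow_mul]
    _ ≤ 2 * ∑' t, ENNReal.ofReal (gradLen G f t) * ENNReal.ofReal (c * μ t) := by
        gcongr with t
        · exact parentEdgeDiff_le_gradLen pa a f hlf htree t
        · exact tsum_indicator_shadow_ofReal_le pa hμ hμsum (hjohn t)
    _ = ENNReal.ofReal (2 * c) * ∑' t, ENNReal.ofReal (gradLen G f t * μ t) := by
        rw [← ENNReal.tsum_mul_left, ← ENNReal.tsum_mul_left]
        refine tsum_congr fun t => ?_
        have hgrad : 0 ≤ gradLen G f t := tsum_nonneg fun _ => abs_nonneg _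
        rw [← ENNReal.ofReal_mul hgrad, ← ENNReal.ofReal_ofNat 2, ← ENNReal.ofReal_mul zero_le_two,
          ← ENNReal.ofReal_mul (mul_nonneg zero_le_two hc.le)]
        ring_nf

/-- Global `ℓ¹`-Poincaré inequality: on a weighted connected locally finite graph with a
rooted spanning tree satisfying the John condition `μ(S_t) ≤ c μ(t)`, every mean-zero
`f ∈ ℓ¹(V,μ)` satisfies `‖f‖_{ℓ¹(V,μ)} ≤ 2c ‖|∇f|‖_{ℓ¹(V,μ)}`
(the right-hand side is computed in `[0,∞]`). -/
theorem global_poincare_one {V : Type*} [Countable V] (G : SimpleGraph V) (hG : G.Connected)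
    (hlf : ∀ t : V, {s : V | G.Adj t s}.Finite)
    (pa : V → V) (a : V)
    (hroot : pa a = a) (hreach : ∀ t : V, ∃ n : ℕ, pa^[n] t = a)
    (htree : ∀ t : V, t ≠ a → G.Adj t (pa t))
    (μ : V → ℝ) (hμpos : ∀ t, 0 < μ t) (hμsum : Summable μ)
    (c : ℝ) (hc : 0 < c)
    (hjohn : ∀ t : V, (∑' s : shadow pa t, μ s.1) ≤ c * μ t)
    (f : V → ℝ) (hf : Summable fun s => |f s| * μ s)
    (hmean : (∑' s : V, f s * μ s) = 0) :
    (∑' s : V, ENNReal.ofReal (|f s| * μ s)) ≤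
      ENNReal.ofReal (2 * c) * ∑' t : V, ENNReal.ofReal (gradLen G f t * μ t) :=
  global_poincare_one_general G hlf pa a hreach htree μ hμpos hμsum c hc hjohn f hf hmean
end
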